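/- arXiv:1312.7663 — 3 statements merged into one kernel-verified Lean document; each statement's English description precedes it below -/
import Mathlib

section
/- A topological dynamical system (X,T) on a compact metric space is mean equicontinuous if and only if it is mean-L-stable. -/
open Filter Topology MeasureTheory
open scoped Classical

noncomputable def avgDist {Z : Type*} [MetricSpace Z] (R : Z → Z) (x y : Z) (n : ℕ) : ℝ :=
  (n : ℝ)⁻¹ * ∑ i ∈ Finset.range n, dist (R^[i] x) (R^[i] y)

def MeanEquicontinuous {Z : Type*} [MetricSpace Z] (R : Z → Z) : Prop :=
  ∀ ε > 0, ∃ δ > 0, ∀ x y : Z, dist x y < δ →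
    Filter.limsup (avgDist R x y) Filter.atTop < ε

def MeanEqPtAt {Z : Type*} [MetricSpace Z] (R : Z → Z) (x : Z) : Prop :=
  ∀ ε > 0, ∃ δ > 0, ∀ y : Z, dist x y < δ →
    Filter.limsup (avgDist R x y) Filter.atTop < ε

def MeanSensitive {Z : Type*} [MetricSpace Z] (R : Z → Z) : Prop :=
  ∃ δ > 0, ∀ x : Z, ∀ ε > 0, ∃ y : Z, dist x y < ε ∧
    δ < Filter.limsup (avgDist R x y) Filter.atTop

/-!
Both directions compare, along the orbit pair of `x` and `y`, the Cesàro mean of the distances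
with the frequency of the times at which the distance is at least `ε`. By Markov's inequality the
frequency is at most the mean divided by `ε`; conversely, the mean is at most `ε` plus the
diameter of the space times the frequency. Passing to upper limits, a small mean distance forces
a small upper density of `ε`-separation times and vice versa.
-/

open Finset Metric

theorem Finset.card_filter_mul_le_sum {ι : Type*} (s : Finset ι) {a : ι → ℝ}
    (ha : ∀ i ∈ s, 0 ≤ a i) (ε : ℝ) :
    (#{i ∈ s | ε ≤ a i} : ℝ) * ε ≤ ∑ i ∈ s, a i :=
  calc (#{i ∈ s | ε ≤ a i} : ℝ) * ε = ∑ _i ∈ s with ε ≤ a _i, ε := by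
        rw [sum_const, nsmul_eq_mul]
    _ ≤ ∑ i ∈ s with ε ≤ a i, a i := sum_le_sum fun i hi => (mem_filter.1 hi).2
    _ ≤ ∑ i ∈ s, a i := sum_le_sum_of_subset_of_nonneg (filter_subset _ _) fun i hi _ => ha i hi

theorem Finset.sum_le_mul_card_filter_add_mul_card {ι : Type*} (s : Finset ι) {a : ι → ℝ}
    {C ε : ℝ} (ha : ∀ i ∈ s, a i ≤ C) (hε : 0 ≤ ε) :
    ∑ i ∈ s, a i ≤ C * #{i ∈ s | ε ≤ a i} + ε * #s := by
  rw [← sum_filter_add_sum_filter_not s fun i => ε ≤ a i]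
  gcongr ?_ + ?_
  · rw [mul_comm, ← nsmul_eq_mul]
    exact sum_le_card_nsmul _ _ _ fun i hi => ha i (mem_filter.1 hi).1
  · calc ∑ i ∈ s with ¬ε ≤ a i, a i ≤ #{i ∈ s | ¬ε ≤ a i} • ε :=
          sum_le_card_nsmul _ _ _ fun i hi => (not_le.1 (mem_filter.1 hi).2).le
      _ ≤ ε * #s := by
          rw [nsmul_eq_mul, mul_comm]
          gcongr
          exact filter_subset _ _

theorem Filter.limsup_le_mul_add_of_le {u v : ℕ → ℝ} {c b r : ℝ} (hc : 0 ≤ c)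
    (hu : ∀ n, 0 ≤ u n) (hv : IsBoundedUnder (· ≤ ·) atTop v) (hvr : limsup v atTop < r)
    (huv : ∀ n, u n ≤ c * v n + b) : limsup u atTop ≤ c * r + b :=
  limsup_le_of_le (isCoboundedUnder_le_of_le atTop hu) <|
    (eventually_lt_of_limsup_lt hvr hv).mono fun n hn => (huv n).trans (by gcongr)

theorem Metric.dist_le_diam_univ {Z : Type*} [PseudoMetricSpace Z] [BoundedSpace Z] (x y : Z) :
    dist x y ≤ diam (Set.univ : Set Z) :=
  dist_le_diam_of_mem (Bornology.isBounded_univ.2 ‹_›) trivial trivial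

section MeanStability

variable {Z : Type*} [MetricSpace Z]

noncomputable def separationFreq (R : Z → Z) (ε : ℝ) (x y : Z) (n : ℕ) : ℝ :=
  (#{i ∈ range n | ε ≤ dist (R^[i] x) (R^[i] y)} : ℝ) / n

def MeanLStable (R : Z → Z) : Prop :=
  ∀ ε > 0, ∃ δ > 0, ∀ x y : Z, dist x y < δ → limsup (separationFreq R ε x y) atTop < ε

variable (R : Z → Z) (x y : Z)

theorem avgDist_nonneg (n : ℕ) : 0 ≤ avgDist R x y n := by
  unfold avgDist
  positivity

theorem avgDist_le_diam [BoundedSpace Z] (n : ℕ) : avgDist R x y n ≤ diam (Set.univ : Set Z) := by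
  rcases Nat.eq_zero_or_pos n with rfl | hn
  · simpa [avgDist] using diam_nonneg
  rw [avgDist, inv_mul_le_iff₀ (by exact_mod_cast hn)]
  simpa using sum_le_card_nsmul (range n) _ _ fun i _ => dist_le_diam_univ (R^[i] x) (R^[i] y)

theorem separationFreq_nonneg (ε : ℝ) (n : ℕ) : 0 ≤ separationFreq R ε x y n := by
  unfold separationFreq
  positivity

theorem separationFreq_le_one (ε : ℝ) (n : ℕ) : separationFreq R ε x y n ≤ 1 := by
  refine div_le_one_of_le₀ ?_ n.cast_nonneg
  exact_mod_cast (card_filter_le _ _).trans (card_range n).le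

theorem separationFreq_mul_le_avgDist (ε : ℝ) (n : ℕ) :
    separationFreq R ε x y n * ε ≤ avgDist R x y n :=
  calc separationFreq R ε x y n * ε
      = (n : ℝ)⁻¹ * (#{i ∈ range n | ε ≤ dist (R^[i] x) (R^[i] y)} * ε) := by
        rw [separationFreq]; ring
    _ ≤ avgDist R x y n := by
        rw [avgDist]
        gcongr
        exact card_filter_mul_le_sum _ (fun _ _ => dist_nonneg) ε

theorem avgDist_le_add_diam_mul_separationFreq [BoundedSpace Z] {ε : ℝ} (hε : 0 ≤ ε) (n : ℕ) :
    avgDist R x y n ≤ diam (Set.univ : Set Z) * separationFreq R ε x y n + ε :=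
  calc avgDist R x y n
      ≤ (n : ℝ)⁻¹ * (diam (Set.univ : Set Z) * #{i ∈ range n | ε ≤ dist (R^[i] x) (R^[i] y)}
          + ε * #(range n)) := by
        rw [avgDist]
        gcongr
        exact sum_le_mul_card_filter_add_mul_card _ (fun _ _ => dist_le_diam_univ _ _) hε
    _ = diam (Set.univ : Set Z) * separationFreq R ε x y n + ε * ((n : ℝ)⁻¹ * n) := by
        rw [separationFreq, card_range]
        ring
    _ ≤ diam (Set.univ : Set Z) * separationFreq R ε x y n + ε := by
        gcongr
        exact mul_le_of_le_one_right hε inv_mul_le_one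

theorem MeanEquicontinuous.meanLStable [BoundedSpace Z] (h : MeanEquicontinuous R) :
    MeanLStable R := by
  intro ε hε
  obtain ⟨δ, hδ, hclose⟩ := h (ε ^ 2 / 2) (by positivity)
  refine ⟨δ, hδ, fun x y hxy => ?_⟩
  calc limsup (separationFreq R ε x y) atTop ≤ ε⁻¹ * (ε ^ 2 / 2) + 0 :=
        limsup_le_mul_add_of_le (inv_nonneg.2 hε.le) (separationFreq_nonneg R x y ε)
          (isBoundedUnder_of ⟨_, avgDist_le_diam R x y⟩) (hclose x y hxy) fun n => by
            rw [add_zero, inv_mul_eq_div, le_div_iff₀ hε]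
            exact separationFreq_mul_le_avgDist R x y ε n
    _ < ε := by field_simp; linarith

theorem MeanLStable.meanEquicontinuous [BoundedSpace Z] (h : MeanLStable R) :
    MeanEquicontinuous R := by
  set C := diam (Set.univ : Set Z)
  intro ε hε
  have hC : 0 ≤ C := diam_nonneg
  obtain ⟨δ, hδ, hclose⟩ := h (ε / (C + 2)) (by positivity)
  refine ⟨δ, hδ, fun x y hxy => ?_⟩
  calc limsup (avgDist R x y) atTop ≤ C * (ε / (C + 2)) + ε / (C + 2) :=
        limsup_le_mul_add_of_le hC (avgDist_nonneg R x y)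
          (isBoundedUnder_of ⟨1, separationFreq_le_one R x y _⟩) (hclose x y hxy)
          (avgDist_le_add_diam_mul_separationFreq R x y (by positivity))
    _ < ε := by
        rw [← add_one_mul, mul_div_assoc', div_lt_iff₀ (by positivity)]
        nlinarith

end MeanStability

theorem mean_equicontinuous_iff_mean_L_stable_general
    {X : Type*} [MetricSpace X] [CompactSpace X] (T : X → X) :
    MeanEquicontinuous T ↔
      ∀ ε > 0, ∃ δ > 0, ∀ x y : X, dist x y < δ →
        Filter.limsup (fun n : ℕ =>
          (((Finset.range n).filter (fun i => ε ≤ dist (T^[i] x) (T^[i] y))).card : ℝ) / n)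
          Filter.atTop < ε :=
  ⟨MeanEquicontinuous.meanLStable T, MeanLStable.meanEquicontinuous T⟩

theorem mean_equicontinuous_iff_mean_L_stable
    {X : Type*} [MetricSpace X] [CompactSpace X] (T : X → X) (hT : Continuous T) :
    MeanEquicontinuous T ↔
      ∀ ε > 0, ∃ δ > 0, ∀ x y : X, dist x y < δ →
        Filter.limsup (fun n : ℕ =>
          (((Finset.range n).filter (fun i => ε ≤ dist (T^[i] x) (T^[i] y))).card : ℝ) / n)
          Filter.atTop < ε :=
  mean_equicontinuous_iff_mean_L_stable_general T
end

section
/- If for every f ∈ C(X×X) the sequence of Birkhoff averages f_n converges uniformly to a (T×T)-invariant continuous function, then (X,T) is mean equicontinuous. -/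
open Filter Topology MeasureTheory
open scoped Classical

/-!
Applied to `f = dist`, the hypothesis makes the mean distance `limsup avgDist T x y` equal to
`g (x, y)` for a continuous `g` vanishing on the diagonal. On a compact space `g` is uniformly
continuous, so `g (x, y) = |g (x, y) - g (x, x)|` is small once `dist x y` is.
-/

section

variable {Z : Type*} [MetricSpace Z]

@[simp]
theorem avgDist_self (R : Z → Z) (x : Z) : avgDist R x x = 0 := by
  ext n
  simp [avgDist]

theorem MeanEquicontinuous.of_tendsto_avgDist [CompactSpace Z] (R : Z → Z) (g : C(Z × Z, ℝ))
    (hg : ∀ x y, Tendsto (avgDist R x y) atTop (𝓝 (g (x, y)))) : MeanEquicontinuous R := by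
  have hdiag : ∀ x, g (x, x) = 0 := fun x =>
    tendsto_nhds_unique (hg x x) (by rw [avgDist_self]; exact tendsto_const_nhds)
  intro ε hε
  obtain ⟨δ, hδ, hgδ⟩ := Metric.uniformContinuous_iff.mp
    (CompactSpace.uniformContinuous_of_continuous g.continuous) ε hε
  refine ⟨δ, hδ, fun x y hxy => ?_⟩
  have hclose : dist (x, y) (x, x) < δ := by
    rw [Prod.dist_eq, dist_self, dist_comm]
    exact max_lt hδ hxy
  have hsmall := hgδ hclose
  rw [hdiag x, Real.dist_0_eq_abs] at hsmall
  rw [(hg x y).limsup_eq]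
  exact (le_abs_self _).trans_lt hsmall

end

theorem meanEquicontinuous_of_uniform_convergence_general
    {X : Type*} [MetricSpace X] [CompactSpace X] (T : X → X)
    (h : ∀ f : C(X × X, ℝ), ∃ g : C(X × X, ℝ),
      (∀ p : X × X, g (T p.1, T p.2) = g p) ∧
      TendstoUniformly
        (fun (n : ℕ) (p : X × X) =>
          (n : ℝ)⁻¹ * ∑ i ∈ Finset.range n, f (T^[i] p.1, T^[i] p.2))
        (fun p => g p) Filter.atTop) :
    MeanEquicontinuous T := by
  obtain ⟨g, -, hconv⟩ := h ⟨fun p => dist p.1 p.2, continuous_dist⟩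
  exact MeanEquicontinuous.of_tendsto_avgDist T g fun x y => hconv.tendsto_at (x, y)

theorem meanEquicontinuous_of_uniform_convergence
    {X : Type*} [MetricSpace X] [CompactSpace X] (T : X → X) (hT : Continuous T)
    (h : ∀ f : C(X × X, ℝ), ∃ g : C(X × X, ℝ),
      (∀ p : X × X, g (T p.1, T p.2) = g p) ∧
      TendstoUniformly
        (fun (n : ℕ) (p : X × X) =>
          (n : ℝ)⁻¹ * ∑ i ∈ Finset.range n, f (T^[i] p.1, T^[i] p.2))
        (fun p => g p) Filter.atTop) :
    MeanEquicontinuous T :=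
  meanEquicontinuous_of_uniform_convergence_general T h
end

section
/- If a set S ⊆ ℕ has positive upper Banach density, then for every k ≥ 1 and ε > 0 there is N such that any set of n ≥ N natural numbers s_1 < ⋯ < s_n contains indices t_1 < ⋯ < t_k with BD*((S−s_{t_1}) ∩ ⋯ ∩ (S−s_{t_k})) ≥ (BD*(S))^k − ε. -/
/-!
Take a window `W = [M, M + L]` in which `S` has density close to `d = BD*(S)`, with `L` much
larger than every shift `s i`; then each shifted set `S - s i` still has density close to `d`
in `W`. Let `f m` be the number of `i` with `m + s i ∈ S`. By Jensen, `∑_{m ∈ W} f m ^ k` is at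
least about `(d n) ^ k |W|`; on the other hand it counts pairs of a `k`-tuple of indices and a
common point of the corresponding shifts, and tuples with a repeated index contribute at most
`k² n ^ (k - 1) |W|`. Hence some `k`-set `T` of indices satisfies
`|W ∩ ⋂_{i ∈ T} (S - s i)| ≥ (d ^ k - k² / n) |W|`. As there are finitely many `T`, one of them
works for arbitrarily long windows, which bounds the upper Banach density of its intersection.
-/

open Filter Topology
open scoped Classical

noncomputable def upperBanachDensity (F : Set ℕ) : ℝ :=
  Filter.limsup (fun k : ℕ =>
    ⨆ M : ℕ, (((Finset.Icc M (M + k)).filter (fun i => i ∈ F)).card : ℝ) / (k + 1))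
    Filter.atTop

open Finset

theorem Nat.pow_le_descFactorial_add (x k : ℕ) :
    x ^ k ≤ x.descFactorial k + k ^ 2 * x ^ (k - 1) := by
  induction k with
  | zero => simp
  | succ k ih =>
    have hD : x * x.descFactorial k ≤ x.descFactorial (k + 1) + k * x ^ k := by
      rw [Nat.descFactorial_succ]
      calc x * x.descFactorial k ≤ (x - k + k) * x.descFactorial k := by gcongr; omega
        _ ≤ (x - k) * x.descFactorial k + k * x ^ k := by
          rw [add_mul]; gcongr; exact Nat.descFactorial_le_pow x k
    have hE : k ^ 2 * x ^ (k - 1) * x ≤ k ^ 2 * x ^ k := by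
      rcases k with _ | k <;> simp [pow_succ, mul_assoc]
    calc x ^ (k + 1) = x * x ^ k := by ring
      _ ≤ x * (x.descFactorial k + k ^ 2 * x ^ (k - 1)) := by gcongr
      _ = x * x.descFactorial k + k ^ 2 * x ^ (k - 1) * x := by ring
      _ ≤ x.descFactorial (k + 1) + k * x ^ k + k ^ 2 * x ^ k := add_le_add hD hE
      _ = x.descFactorial (k + 1) + (k + k ^ 2) * x ^ k := by ring
      _ ≤ x.descFactorial (k + 1) + (k + 1) ^ 2 * x ^ k := by gcongr; nlinarith

namespace Finset

variable {ι α : Type*} [Fintype ι]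

theorem sum_card_powersetCard_eq_sum_card_filter_forall (W : Finset α) (P : ι → α → Prop)
    (k : ℕ) :
    ∑ a ∈ W, #(powersetCard k {i | P i a}) =
      ∑ T ∈ powersetCard k univ, #{a ∈ W | ∀ i ∈ T, P i a} := by
  refine (sum_congr rfl fun a _ => congrArg card ?_).trans
    (sum_card_bipartiteAbove_eq_sum_card_bipartiteBelow fun a (T : Finset ι) => ∀ i ∈ T, P i a)
  ext T
  simp [bipartiteAbove, mem_powersetCard, subset_iff, and_comm]

theorem exists_card_eq_sum_card_pow_le (W : Finset α) (P : ι → α → Prop) {k : ℕ}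
    (hk : k ≤ Fintype.card ι) :
    ∃ T : Finset ι, #T = k ∧ ∑ a ∈ W, #{i | P i a} ^ k ≤
      Fintype.card ι ^ k * #{a ∈ W | ∀ i ∈ T, P i a} +
        k ^ 2 * Fintype.card ι ^ (k - 1) * #W := by
  set n := Fintype.card ι
  obtain ⟨T, hT, hmax⟩ := (powersetCard k (univ : Finset ι)).exists_max_image
    (fun T => #{a ∈ W | ∀ i ∈ T, P i a}) (powersetCard_nonempty.2 (by simpa using hk))
  refine ⟨T, (mem_powersetCard.1 hT).2, ?_⟩
  have hpoint (a : α) : #{i | P i a} ^ k ≤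
      k.factorial * #(powersetCard k {i | P i a}) + k ^ 2 * n ^ (k - 1) := by
    rw [card_powersetCard, ← Nat.descFactorial_eq_factorial_mul_choose]
    refine (Nat.pow_le_descFactorial_add _ k).trans ?_
    gcongr
    exact card_le_univ _
  calc ∑ a ∈ W, #{i | P i a} ^ k
      ≤ ∑ a ∈ W, (k.factorial * #(powersetCard k {i | P i a}) + k ^ 2 * n ^ (k - 1)) :=
        sum_le_sum fun a _ => hpoint a
    _ = k.factorial * ∑ T ∈ powersetCard k univ, #{a ∈ W | ∀ i ∈ T, P i a} +
          k ^ 2 * n ^ (k - 1) * #W := by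
        rw [sum_add_distrib, ← mul_sum, sum_card_powersetCard_eq_sum_card_filter_forall,
          sum_const, smul_eq_mul, mul_comm #W]
    _ ≤ k.factorial * (n.choose k * #{a ∈ W | ∀ i ∈ T, P i a}) +
          k ^ 2 * n ^ (k - 1) * #W := by
        gcongr
        simpa using sum_le_card_nsmul _ _ _ hmax
    _ ≤ n ^ k * #{a ∈ W | ∀ i ∈ T, P i a} + k ^ 2 * n ^ (k - 1) * #W := by
        rw [← mul_assoc, ← Nat.descFactorial_eq_factorial_mul_choose]
        gcongr
        exact Nat.descFactorial_le_pow n k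

theorem exists_card_eq_pow_sub_mul_card_le (W : Finset α) (P : ι → α → Prop) {k : ℕ}
    (hk : k ≤ Fintype.card ι) {β : ℝ} (hβ : 0 ≤ β) (hP : ∀ i, β * #W ≤ #{a ∈ W | P i a}) :
    ∃ T : Finset ι, #T = k ∧
      (β ^ k - k ^ 2 / Fintype.card ι) * #W ≤ #{a ∈ W | ∀ i ∈ T, P i a} := by
  obtain ⟨T, hT, hcount⟩ := exists_card_eq_sum_card_pow_le W P hk
  refine ⟨T, hT, ?_⟩
  rcases k with _ | k
  · simp [card_eq_zero.1 hT]
  rcases W.eq_empty_or_nonempty with rfl | hW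
  · simp
  set n := Fintype.card ι
  set c := #{a ∈ W | ∀ i ∈ T, P i a}
  have hn : (0 : ℝ) < n := by norm_cast; omega
  have hsum : n * (β * #W) ≤ ∑ a ∈ W, (#{i | P i a} : ℝ) := by
    have hswap : ∑ i, #{a ∈ W | P i a} = ∑ a ∈ W, #{i | P i a} := by
      simp only [card_filter]; exact sum_comm
    calc (n : ℝ) * (β * #W) ≤ ∑ i, (#{a ∈ W | P i a} : ℝ) := by
          simpa using card_nsmul_le_sum univ _ _ fun i _ => hP i
      _ = ∑ a ∈ W, (#{i | P i a} : ℝ) := by exact_mod_cast hswap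
  have hpow : (n * β * #W) ^ (k + 1) ≤
      (#W : ℝ) ^ k * (n ^ (k + 1) * c + (k + 1) ^ 2 * n ^ k * #W) := calc
    (n * β * #W : ℝ) ^ (k + 1) ≤ (∑ a ∈ W, (#{i | P i a} : ℝ)) ^ (k + 1) := by
      gcongr; linarith
    _ ≤ #W ^ k * ∑ a ∈ W, (#{i | P i a} : ℝ) ^ (k + 1) :=
      pow_sum_le_card_mul_sum_pow (fun _ _ => Nat.cast_nonneg _) k
    _ ≤ #W ^ k * (n ^ (k + 1) * c + (k + 1) ^ 2 * n ^ k * #W) := by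
      gcongr; exact_mod_cast hcount
  have hpos : (0 : ℝ) < n ^ (k + 1) * #W ^ k := by positivity
  refine le_of_mul_le_mul_left ?_ hpos
  calc (n : ℝ) ^ (k + 1) * #W ^ k * ((β ^ (k + 1) - ((k + 1 : ℕ) : ℝ) ^ 2 / n) * #W)
      = (n * β * #W) ^ (k + 1) - #W ^ k * ((k + 1) ^ 2 * n ^ k * #W) := by
        field_simp [hn.ne']; push_cast; ring
    _ ≤ (n : ℝ) ^ (k + 1) * #W ^ k * c := by linarith

end Finset

theorem Nat.card_Icc_self_add (M L : ℕ) : #(Icc M (M + L)) = L + 1 := by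
  rw [Nat.card_Icc]; omega

noncomputable def windowDensity (F : Set ℕ) (L M : ℕ) : ℝ :=
  #{i ∈ Icc M (M + L) | i ∈ F} / (L + 1)

theorem windowDensity_nonneg (F : Set ℕ) (L M : ℕ) : 0 ≤ windowDensity F L M := by
  unfold windowDensity; positivity

theorem windowDensity_le_one (F : Set ℕ) (L M : ℕ) : windowDensity F L M ≤ 1 := by
  unfold windowDensity
  rw [div_le_one (by positivity)]
  calc (#{i ∈ Icc M (M + L) | i ∈ F} : ℝ) ≤ #(Icc M (M + L)) := by
        exact_mod_cast card_filter_le _ _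
    _ = L + 1 := by rw [Nat.card_Icc_self_add]; push_cast; rfl

theorem card_filter_Icc_le_card_filter_Icc_add (F : Set ℕ) (L M s : ℕ) :
    #{i ∈ Icc M (M + L) | i ∈ F} ≤ #{m ∈ Icc M (M + L) | m + s ∈ F} + s := by
  have hcover : {i ∈ Icc M (M + L) | i ∈ F} ⊆
      Ico M (M + s) ∪ {m ∈ Icc M (M + L) | m + s ∈ F}.image (· + s) := by
    intro i hi
    simp only [mem_filter, mem_Icc] at hi
    by_cases his : i < M + s
    · exact mem_union_left _ (mem_Ico.2 ⟨hi.1.1, his⟩)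
    · refine mem_union_right _ (mem_image.2 ⟨i - s, ?_, Nat.sub_add_cancel (by omega)⟩)
      simp only [mem_filter, mem_Icc, Nat.sub_add_cancel (by omega : s ≤ i)]
      exact ⟨by omega, hi.2⟩
  calc #{i ∈ Icc M (M + L) | i ∈ F}
      ≤ #(Ico M (M + s)) + #({m ∈ Icc M (M + L) | m + s ∈ F}.image (· + s)) :=
        (card_le_card hcover).trans (card_union_le _ _)
    _ ≤ s + #{m ∈ Icc M (M + L) | m + s ∈ F} := add_le_add (by simp) card_image_le
    _ = _ := add_comm _ _

theorem windowDensity_le_windowDensity_shift_add (F : Set ℕ) (L M s : ℕ) :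
    windowDensity F L M ≤ windowDensity {m | m + s ∈ F} L M + s / (L + 1) := by
  unfold windowDensity
  rw [← add_div]
  gcongr
  exact_mod_cast card_filter_Icc_le_card_filter_Icc_add F L M s

theorem exists_card_eq_le_windowDensity_biInter {ι : Type*} [Fintype ι] (F : ι → Set ℕ)
    {L M k : ℕ} (hk : k ≤ Fintype.card ι) {β : ℝ} (hβ : 0 ≤ β)
    (hF : ∀ i, β ≤ windowDensity (F i) L M) :
    ∃ T : Finset ι, #T = k ∧
      β ^ k - k ^ 2 / Fintype.card ι ≤ windowDensity (⋂ i ∈ T, F i) L M := by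
  have hL : (0 : ℝ) < L + 1 := by positivity
  have hW : (#(Icc M (M + L)) : ℝ) = L + 1 := by rw [Nat.card_Icc_self_add]; push_cast; rfl
  obtain ⟨T, hT, hdense⟩ := exists_card_eq_pow_sub_mul_card_le (Icc M (M + L))
    (fun i m => m ∈ F i) hk hβ fun i => by
      rw [hW, ← le_div_iff₀ hL]; exact hF i
  refine ⟨T, hT, ?_⟩
  rw [windowDensity, le_div_iff₀ hL, ← hW]
  simpa only [Set.mem_iInter₂] using hdense

theorem bddAbove_range_windowDensity (F : Set ℕ) (L : ℕ) :
    BddAbove (Set.range (windowDensity F L)) :=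
  ⟨1, Set.forall_mem_range.2 (windowDensity_le_one F L)⟩

theorem le_upperBanachDensity_of_frequently {F : Set ℕ} {c : ℝ}
    (h : ∃ᶠ L in atTop, ∃ M, c ≤ windowDensity F L M) : c ≤ upperBanachDensity F :=
  le_limsup_of_frequently_le
    (h.mono fun L ⟨M, hM⟩ => hM.trans (le_ciSup (bddAbove_range_windowDensity F L) M))
    (isBoundedUnder_of ⟨1, fun L => ciSup_le (windowDensity_le_one F L)⟩)

theorem frequently_lt_windowDensity_of_lt_upperBanachDensity {F : Set ℕ} {b : ℝ}
    (h : b < upperBanachDensity F) : ∃ᶠ L in atTop, ∃ M, b < windowDensity F L M :=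
  (frequently_lt_of_lt_limsup
    (isBoundedUnder_of ⟨0, fun L => Real.iSup_nonneg (windowDensity_nonneg F L)⟩
      ).isCoboundedUnder_le h).mono fun _ hL => exists_lt_of_lt_ciSup hL

theorem exists_card_eq_le_upperBanachDensity_biInter {ι : Type*} [Fintype ι] (S : Set ℕ)
    (s : ι → ℕ) {k : ℕ} (hk : k ≤ Fintype.card ι) {β : ℝ} (hβ : 0 ≤ β)
    (hβS : β < upperBanachDensity S) :
    ∃ T : Finset ι, #T = k ∧
      β ^ k - k ^ 2 / Fintype.card ι ≤ upperBanachDensity (⋂ i ∈ T, {m | m + s i ∈ S}) := by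
  obtain ⟨β', hββ', hβ'S⟩ := exists_between hβS
  set σ := univ.sup s
  have hσ_small : ∀ᶠ L : ℕ in atTop, (σ : ℝ) / (L + 1) ≤ β' - β := by
    have := ((tendsto_const_div_atTop_nhds_zero_nat (σ : ℝ)).comp
      (tendsto_add_atTop_nat 1)).eventually (ge_mem_nhds (sub_pos.2 hββ'))
    simpa using this
  have hgood : ∃ᶠ L in atTop, ∃ T ∈ powersetCard k univ, ∃ M,
      β ^ k - k ^ 2 / Fintype.card ι ≤ windowDensity (⋂ i ∈ T, {m | m + s i ∈ S}) L M := by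
    refine ((frequently_lt_windowDensity_of_lt_upperBanachDensity hβ'S).and_eventually
      hσ_small).mono ?_
    rintro L ⟨⟨M, hM⟩, hL⟩
    obtain ⟨T, hT, hTM⟩ := exists_card_eq_le_windowDensity_biInter
      (fun i => {m | m + s i ∈ S}) hk hβ fun i => by
        have hsi : (s i : ℝ) / (L + 1) ≤ σ / (L + 1) := by
          gcongr; exact_mod_cast le_sup (mem_univ i)
        linarith [windowDensity_le_windowDensity_shift_add S L M (s i)]
    exact ⟨T, mem_powersetCard.2 ⟨subset_univ T, hT⟩, M, hTM⟩
  obtain ⟨T, hT, hfreq⟩ := (frequently_exists_finset _).1 hgood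
  exact ⟨T, (mem_powersetCard.1 hT).2, le_upperBanachDensity_of_frequently hfreq⟩

theorem Finset.exists_strictMono_iInter_eq_biInter {ι α : Type*} [LinearOrder ι] (T : Finset ι)
    {k : ℕ} (hT : #T = k) (F : ι → Set α) :
    ∃ t : Fin k → ι, StrictMono t ∧ ⋂ j, F (t j) = ⋂ i ∈ T, F i :=
  ⟨T.orderEmbOfFin hT, (T.orderEmbOfFin hT).strictMono, by
    rw [← set_biInter_coe, ← range_orderEmbOfFin T hT, Set.biInter_range]⟩

theorem exists_mem_Ico_sub_lt_pow {d δ : ℝ} (hd : 0 < d) (hδ : 0 < δ) (k : ℕ) :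
    ∃ β ∈ Set.Ico 0 d, d ^ k - δ < β ^ k := by
  have hnear : ∀ᶠ x in 𝓝[<] d, d ^ k - δ < x ^ k :=
    nhdsWithin_le_nhds (((continuous_pow k).tendsto d).eventually (lt_mem_nhds (by linarith)))
  obtain ⟨β, hβ, hβd⟩ := (hnear.and (Ioo_mem_nhdsLT hd)).exists
  exact ⟨β, ⟨hβd.1.le, hβd.2⟩, hβ⟩

theorem banach_density_intersection_general
    (S : Set ℕ) (hS : 0 < upperBanachDensity S)
    (k : ℕ) (ε : ℝ) (hε : 0 < ε) :
    ∃ N : ℕ, ∀ n : ℕ, N ≤ n → ∀ s : Fin n → ℕ, StrictMono s →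
      ∃ t : Fin k → Fin n, StrictMono t ∧
        upperBanachDensity S ^ k - ε ≤
          upperBanachDensity (⋂ j : Fin k, {m : ℕ | m + s (t j) ∈ S}) := by
  obtain ⟨β, ⟨hβ, hβS⟩, hβk⟩ := exists_mem_Ico_sub_lt_pow hS (half_pos hε) k
  obtain ⟨N, hN⟩ := eventually_atTop.1 ((eventually_ge_atTop k).and
    ((tendsto_const_div_atTop_nhds_zero_nat ((k : ℝ) ^ 2)).eventually
      (ge_mem_nhds (half_pos hε))))
  refine ⟨N, fun n hn s _ => ?_⟩
  obtain ⟨hkn, herr⟩ := hN n hn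
  obtain ⟨T, hT, hdense⟩ :=
    exists_card_eq_le_upperBanachDensity_biInter S s (by simpa using hkn) hβ hβS
  obtain ⟨t, ht, hinter⟩ := T.exists_strictMono_iInter_eq_biInter hT fun i => {m | m + s i ∈ S}
  refine ⟨t, ht, ?_⟩
  rw [Fintype.card_fin] at hdense
  rw [hinter]
  linarith

theorem banach_density_intersection
    (S : Set ℕ) (hS : 0 < upperBanachDensity S)
    (k : ℕ) (hk : 1 ≤ k) (ε : ℝ) (hε : 0 < ε) :
    ∃ N : ℕ, ∀ n : ℕ, N ≤ n → ∀ s : Fin n → ℕ, StrictMono s →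
      ∃ t : Fin k → Fin n, StrictMono t ∧
        upperBanachDensity S ^ k - ε ≤
          upperBanachDensity (⋂ j : Fin k, {m : ℕ | m + s (t j) ∈ S}) :=
  banach_density_intersection_general S hS k ε hε
end
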